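/- arXiv:1904.02986 — 2 statements merged into one kernel-verified Lean document; each statement's English description precedes it below -/
import Mathlib

section
/- Let m, n, r ∈ ℕ with m ≥ n, let (a_k) be a sequence of complex numbers, and let t ∈ ℝ be such that t ≠ 2lπ/r for every integer l. Then ∑_{k=n}^{m} a_k sin(kt) = −∑_{k=n}^{m} (a_k − a_{k+r}) D̃°_{k,r}(t) + ∑_{k=m+1}^{m+r} a_k D̃°_{k,−r}(t) − ∑_{k=n}^{n+r−1} a_k D̃°_{k,−r}(t). -/
/-!
Since `cos (x + y) - cos (x - y) = -2 sin x sin y`, the sine is an `r`-step difference of the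
kernels: `sin (k t) = D̃°_{k+r,-r}(t) - D̃°_{k,-r}(t)`, and moreover `D̃°_{k,r} = -D̃°_{k+r,-r}`.
The identity is then summation by parts with step `r`.
-/

open Real Finset

noncomputable section

/-- The kernel `D̃°_{k,ρ}(t) = cos((2k+ρ)t/2) / (2 sin(ρt/2))`. -/
def DkerConj (k : ℕ) (ρ : ℤ) (t : ℝ) : ℝ :=
  Real.cos ((2 * (k : ℝ) + (ρ : ℝ)) * t / 2) / (2 * Real.sin ((ρ : ℝ) * t / 2))

theorem Finset.sum_Ico_mul_sub_shift {R : Type*} [Ring R] (a f : ℕ → R) {n m : ℕ} (hnm : n ≤ m)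
    (r : ℕ) :
    ∑ k ∈ Ico n m, a k * (f (k + r) - f k)
      = ∑ k ∈ Ico n m, (a k - a (k + r)) * f (k + r)
        + ∑ k ∈ Ico m (m + r), a k * f k - ∑ k ∈ Ico n (n + r), a k * f k := by
  have hshift : ∑ k ∈ Ico n m, a (k + r) * f (k + r) = ∑ k ∈ Ico (n + r) (m + r), a k * f k :=
    sum_Ico_add' (fun k => a k * f k) n m r
  have hsplit : ∑ k ∈ Ico n m, a k * f k + ∑ k ∈ Ico m (m + r), a k * f k
      = ∑ k ∈ Ico n (n + r), a k * f k + ∑ k ∈ Ico (n + r) (m + r), a k * f k := by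
    rw [sum_Ico_consecutive _ hnm (m.le_add_right r),
      sum_Ico_consecutive _ (n.le_add_right r) (Nat.add_le_add_right hnm r)]
  simp only [mul_sub, sub_mul, sum_sub_distrib, hshift, eq_sub_of_add_eq' hsplit.symm]
  abel

theorem DkerConj_add_neg_sub (k r : ℕ) (t : ℝ) (hs : sin (r * t / 2) ≠ 0) :
    DkerConj (k + r) (-r) t - DkerConj k (-r) t = sin (k * t) := by
  unfold DkerConj
  push_cast
  rw [show (2 * ((k : ℝ) + r) + -r) * t / 2 = k * t + r * t / 2 by ring,
    show (2 * (k : ℝ) + -r) * t / 2 = k * t - r * t / 2 by ring,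
    show -(r : ℝ) * t / 2 = -(r * t / 2) by ring, sin_neg, div_sub_div_same, cos_add, cos_sub,
    div_eq_iff (by simpa using hs)]
  ring

theorem DkerConj_eq_neg_DkerConj_add (k r : ℕ) (t : ℝ) :
    DkerConj k r t = -DkerConj (k + r) (-r) t := by
  unfold DkerConj
  push_cast
  rw [show (2 * ((k : ℝ) + r) + -r) * t / 2 = (2 * k + r) * t / 2 by ring,
    show -(r : ℝ) * t / 2 = -(r * t / 2) by ring, sin_neg]
  ring

theorem sin_mul_div_two_ne_zero {r : ℕ} (hr : r ≠ 0) {t : ℝ}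
    (ht : ∀ l : ℤ, t ≠ 2 * (l : ℝ) * π / (r : ℝ)) : sin (r * t / 2) ≠ 0 := by
  rw [Ne, sin_eq_zero_iff]
  rintro ⟨l, hl⟩
  refine ht l ?_
  field_simp
  linarith

/-- **Lemma 3, sine part.** Summation-by-parts identity with `r`-differences. -/
theorem lemma_three_sin (m n r : ℕ) (hr : 1 ≤ r) (hmn : n ≤ m) (a : ℕ → ℂ) (t : ℝ)
    (ht : ∀ l : ℤ, t ≠ 2 * (l : ℝ) * π / (r : ℝ)) :
    ∑ k ∈ Finset.Icc n m, a k * ((Real.sin ((k : ℝ) * t) : ℝ) : ℂ)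
      = -∑ k ∈ Finset.Icc n m, (a k - a (k + r)) * ((DkerConj k (r : ℤ) t : ℝ) : ℂ)
        + ∑ k ∈ Finset.Icc (m + 1) (m + r), a k * ((DkerConj k (-(r : ℤ)) t : ℝ) : ℂ)
        - ∑ k ∈ Finset.Icc n (n + r - 1), a k * ((DkerConj k (-(r : ℤ)) t : ℝ) : ℂ) := by
  have hs := sin_mul_div_two_ne_zero (Nat.one_le_iff_ne_zero.mp hr) ht
  have hsin (k : ℕ) : (sin (k * t) : ℂ) = DkerConj (k + r) (-r) t - DkerConj k (-r) t := by
    exact_mod_cast (DkerConj_add_neg_sub k r t hs).symm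
  have hker (k : ℕ) : (DkerConj k r t : ℂ) = -DkerConj (k + r) (-r) t := by
    exact_mod_cast DkerConj_eq_neg_DkerConj_add k r t
  simp only [hsin, hker, mul_neg, sum_neg_distrib, neg_neg]
  have htop : Icc (m + 1) (m + r) = Ico (m + 1) (m + 1 + r) := by
    rw [add_right_comm, Ico_add_one_right_eq_Icc]
  have hbot : Icc n (n + r - 1) = Ico n (n + r) :=
    Icc_sub_one_right_eq_Ico_of_not_isMin (by simp; omega) n
  rw [← Ico_add_one_right_eq_Icc n m, htop, hbot]
  exact sum_Ico_mul_sub_shift a (fun k => (DkerConj k (-r) t : ℂ)) (by omega) r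
end
end

section
/- Let r ∈ ℕ, let n be fixed, and let (a_{n,k})_{k≥0} be nonnegative real numbers with lim_{k→∞} a_{n,k} = 0 and ∑_{k=0}^∞ a_{n,k} = 1. If t ∈ ℝ satisfies t ≠ 2lπ/r for every integer l, then |∑_{k=0}^∞ a_{n,k} D̃°_{k,1}(t)| ≤ (1/(2|sin(t/2) sin(rt/2)|)) (A_{n,r} + ∑_{k=0}^{r−1} a_{n,k}) ≤ A_{n,r}/|sin(t/2) sin(rt/2)|, where A_{n,r} = ∑_{k=0}^∞ |a_{n,k} − a_{n,k+r}|. -/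
open Real Filter

noncomputable section

/-!
With `u m = sin((2m + 1 - r)t/2)` one has `2 sin(rt/2) cos((2k+1)t/2) = u (k+r) - u k`, so
`2 sin(rt/2) ∑ a_k cos((2k+1)t/2)` is a sum `∑ a_k (u_{k+r} - u_k)`. Summation by parts with
step `r` turns it into `∑ (a_k - a_{k+r}) u_{k+r} - ∑_{k<r} a_k u_k`, which is at most
`A_{n,r} + ∑_{k<r} a_k` since `|u| ≤ 1`. Finally `∑_{k<r} a_k = ∑ (a_k - a_{k+r}) ≤ A_{n,r}`.
-/

open Finset

theorem Summable.mul_of_abs_le_one {ι : Type*} {a u : ι → ℝ} (ha : Summable a) (hu : ∀ k, |u k| ≤ 1) :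
    Summable fun k => a k * u k :=
  ha.abs.of_norm_bounded fun k => by
    rw [Real.norm_eq_abs, abs_mul]
    exact mul_le_of_le_one_right (abs_nonneg _) (hu k)

theorem Summable.abs_sub_nat_add {a : ℕ → ℝ} (ha : Summable a) (r : ℕ) :
    Summable fun k => |a k - a (k + r)| :=
  (ha.sub ((summable_nat_add_iff r).mpr ha)).abs

theorem sum_range_le_tsum_abs_sub_nat_add {a : ℕ → ℝ} (ha : Summable a) (r : ℕ) :
    ∑ k ∈ range r, a k ≤ ∑' k, |a k - a (k + r)| := by
  have hshift : Summable fun k => a (k + r) := (summable_nat_add_iff r).mpr ha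
  calc ∑ k ∈ range r, a k = ∑' k, (a k - a (k + r)) := by
        rw [ha.tsum_sub hshift, ← ha.sum_add_tsum_nat_add r, add_sub_cancel_right]
    _ ≤ ∑' k, |a k - a (k + r)| :=
        (ha.sub hshift).tsum_le_tsum (fun k => le_abs_self _) (ha.abs_sub_nat_add r)

theorem tsum_mul_sub_nat_add {a u : ℕ → ℝ} (ha : Summable a) (hu : ∀ k, |u k| ≤ 1) (r : ℕ) :
    ∑' k, a k * (u (k + r) - u k)
      = ∑' k, (a k - a (k + r)) * u (k + r) - ∑ k ∈ range r, a k * u k := by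
  have hur : ∀ k, |u (k + r)| ≤ 1 := fun k => hu _
  have h₁ : Summable fun k => a k * u (k + r) := ha.mul_of_abs_le_one hur
  have h₂ : Summable fun k => a k * u k := ha.mul_of_abs_le_one hu
  have h₃ : Summable fun k => a (k + r) * u (k + r) :=
    ((summable_nat_add_iff r).mpr ha).mul_of_abs_le_one hur
  simp only [mul_sub, sub_mul]
  rw [h₁.tsum_sub h₂, h₁.tsum_sub h₃, ← h₂.sum_add_tsum_nat_add r]
  ring

theorem abs_tsum_mul_sub_nat_add_le {a u : ℕ → ℝ} (ha0 : ∀ k, 0 ≤ a k) (ha : Summable a)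
    (hu : ∀ k, |u k| ≤ 1) (r : ℕ) :
    |∑' k, a k * (u (k + r) - u k)| ≤ ∑' k, |a k - a (k + r)| + ∑ k ∈ range r, a k := by
  have hΔ : Summable fun k => (a k - a (k + r)) * u (k + r) :=
    (ha.sub ((summable_nat_add_iff r).mpr ha)).mul_of_abs_le_one fun k => hu _
  have htail : |∑' k, (a k - a (k + r)) * u (k + r)| ≤ ∑' k, |a k - a (k + r)| := by
    refine (norm_tsum_le_tsum_norm hΔ.norm).trans <| hΔ.norm.tsum_le_tsum (fun k => ?_)
      (ha.abs_sub_nat_add r)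
    rw [Real.norm_eq_abs, abs_mul]
    exact mul_le_of_le_one_right (abs_nonneg _) (hu _)
  have hhead : |∑ k ∈ range r, a k * u k| ≤ ∑ k ∈ range r, a k := by
    refine (abs_sum_le_sum_abs _ _).trans <| sum_le_sum fun k _ => ?_
    rw [abs_mul, abs_of_nonneg (ha0 k)]
    exact mul_le_of_le_one_right (ha0 k) (hu k)
  rw [tsum_mul_sub_nat_add ha hu r]
  exact (abs_sub _ _).trans (add_le_add htail hhead)

theorem two_mul_sin_mul_cos_eq_sin_sub_sin (r k : ℕ) (t : ℝ) :
    2 * sin (r * t / 2) * cos ((2 * k + 1) * t / 2)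
      = sin ((2 * ↑(k + r) + 1 - r) * t / 2) - sin ((2 * k + 1 - r) * t / 2) := by
  rw [sin_sub_sin]
  push_cast
  ring_nf

theorem two_mul_abs_sin_mul_abs_tsum_mul_cos_le {a : ℕ → ℝ} (ha0 : ∀ k, 0 ≤ a k)
    (ha : Summable a) (r : ℕ) (t : ℝ) :
    2 * |sin (r * t / 2)| * |∑' k : ℕ, a k * cos ((2 * k + 1) * t / 2)|
      ≤ ∑' k, |a k - a (k + r)| + ∑ k ∈ range r, a k := by
  set u : ℕ → ℝ := fun m => sin ((2 * m + 1 - r) * t / 2)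
  have hsum : 2 * sin (r * t / 2) * ∑' k : ℕ, a k * cos ((2 * k + 1) * t / 2)
      = ∑' k, a k * (u (k + r) - u k) := by
    rw [← tsum_mul_left]
    refine tsum_congr fun k => ?_
    rw [← two_mul_sin_mul_cos_eq_sin_sub_sin]
    ring
  calc 2 * |sin (r * t / 2)| * |∑' k : ℕ, a k * cos ((2 * k + 1) * t / 2)|
      = |∑' k, a k * (u (k + r) - u k)| := by rw [← hsum, abs_mul, abs_mul, abs_two]
    _ ≤ _ := abs_tsum_mul_sub_nat_add_le (u := u) ha0 ha (fun m => abs_sin_le_one _) r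

theorem sin_half_mul_sin_mul_half_ne_zero {r : ℕ} (hr : r ≠ 0) {t : ℝ}
    (ht : ∀ l : ℤ, t ≠ 2 * (l : ℝ) * π / (r : ℝ)) :
    sin (t / 2) * sin ((r : ℝ) * t / 2) ≠ 0 := by
  have hr' : (r : ℝ) ≠ 0 := Nat.cast_ne_zero.mpr hr
  refine mul_ne_zero (fun h => ?_) (fun h => ?_) <;> obtain ⟨n, hn⟩ := sin_eq_zero_iff.mp h
  · refine ht (n * r) ?_
    rw [show t = 2 * n * π by linarith]
    push_cast
    field_simp
  · refine ht n ?_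
    rw [eq_div_iff hr']
    linarith

theorem tsum_mul_DkerConj_one (a : ℕ → ℝ) (t : ℝ) :
    ∑' k : ℕ, a k * DkerConj k 1 t = (∑' k : ℕ, a k * cos ((2 * k + 1) * t / 2)) / (2 * sin (t / 2)) := by
  rw [← tsum_div_const]
  refine tsum_congr fun k => ?_
  simp only [DkerConj, Int.cast_one, one_mul, mul_div_assoc]

theorem lemma_five_general (r : ℕ) (hr : 1 ≤ r) (a : ℕ → ℝ) (ha0 : ∀ k, 0 ≤ a k)
    (hasum : HasSum a 1) (t : ℝ)
    (ht : ∀ l : ℤ, t ≠ 2 * (l : ℝ) * π / (r : ℝ)) :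
    |∑' k : ℕ, a k * DkerConj k 1 t|
        ≤ (1 / (2 * |Real.sin (t / 2) * Real.sin ((r : ℝ) * t / 2)|)) *
            ((∑' k : ℕ, |a k - a (k + r)|) + ∑ k ∈ Finset.range r, a k)
      ∧ (1 / (2 * |Real.sin (t / 2) * Real.sin ((r : ℝ) * t / 2)|)) *
            ((∑' k : ℕ, |a k - a (k + r)|) + ∑ k ∈ Finset.range r, a k)
          ≤ (∑' k : ℕ, |a k - a (k + r)|) /
              |Real.sin (t / 2) * Real.sin ((r : ℝ) * t / 2)| := by
  have hsin := sin_half_mul_sin_mul_half_ne_zero (Nat.one_le_iff_ne_zero.mp hr) ht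
  have hs₁ : 0 < |sin (t / 2)| := abs_pos.mpr (left_ne_zero_of_mul hsin)
  have hs₂ : 0 < |sin (r * t / 2)| := abs_pos.mpr (right_ne_zero_of_mul hsin)
  have hmain := two_mul_abs_sin_mul_abs_tsum_mul_cos_le ha0 hasum.summable r t
  have hhead := sum_range_le_tsum_abs_sub_nat_add hasum.summable r
  rw [abs_mul]
  constructor
  · rw [tsum_mul_DkerConj_one, abs_div, abs_mul, abs_two, div_le_iff₀ (by positivity),
      one_div_mul_eq_div, div_mul_eq_mul_div, le_div_iff₀ (by positivity)]
    have hX := mul_nonneg (mul_nonneg (abs_nonneg (∑' k : ℕ, a k * cos ((2 * k + 1) * t / 2)))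
      hs₁.le) hs₂.le
    linarith [mul_le_mul_of_nonneg_left hmain hs₁.le]
  · rw [one_div_mul_eq_div, div_le_div_iff₀ (by positivity) (by positivity)]
    nlinarith [mul_pos hs₁ hs₂]

/-- **Lemma 5.** Bound on the `A`-transform of the conjugate Dirichlet kernels by
`r`-differences of the entries. -/
theorem lemma_five (r : ℕ) (hr : 1 ≤ r) (a : ℕ → ℝ) (ha0 : ∀ k, 0 ≤ a k)
    (halim : Tendsto a atTop (nhds 0)) (hasum : HasSum a 1) (t : ℝ)
    (ht : ∀ l : ℤ, t ≠ 2 * (l : ℝ) * π / (r : ℝ)) :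
    |∑' k : ℕ, a k * DkerConj k 1 t|
        ≤ (1 / (2 * |Real.sin (t / 2) * Real.sin ((r : ℝ) * t / 2)|)) *
            ((∑' k : ℕ, |a k - a (k + r)|) + ∑ k ∈ Finset.range r, a k)
      ∧ (1 / (2 * |Real.sin (t / 2) * Real.sin ((r : ℝ) * t / 2)|)) *
            ((∑' k : ℕ, |a k - a (k + r)|) + ∑ k ∈ Finset.range r, a k)
          ≤ (∑' k : ℕ, |a k - a (k + r)|) /
              |Real.sin (t / 2) * Real.sin ((r : ℝ) * t / 2)| :=
  lemma_five_general r hr a ha0 hasum t ht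
end
end
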